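/- For d ≥ 4, there exists a cover of the ridges of the d-cube by 4 + ⌈d/3⌉ sets of ridges such that no set contains a pair of antipodal peaks ((d-3)-faces). -/

import Mathlib

/-!
Take as the `k`-th set all ridges through a vertex `w k`. If ridges `R ⊇ P` and `R' ⊇ P'` through
`w k` contain antipodal peaks, their two fixed coordinates each lie among the three fixed
coordinates of `P` (which are those of `P'`), so they share one, `i`; there both agree with `w k i`,
while `P` and `P'` take opposite values. Every ridge lies in some set as soon as the vertices
realise all four value patterns on every pair of coordinates. With `m = ⌈d/3⌉`, embed the
coordinates into the 2-subsets of `Fin (m + 2)` (possible since `d ≤ 3m ≤ (m+2 choose 2)`); the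
two constant vertices and, for each point `x`, the vertex `i ↦ x ∈ s i` do this, as no two
distinct 2-subsets contain one another.
-/

namespace Cube

/-- A face of the `d`-cube: `none` = varying coordinate (X), `some b` = fixed at `b`. -/
abbrev Face (d : ℕ) := Fin d → Option Bool

/-- `F` is a `k`-face: exactly `k` varying coordinates. -/
def IsKFace {d : ℕ} (F : Face d) (k : ℕ) : Prop :=
  (Finset.univ.filter fun i => F i = none).card = k

/-- `G` is a subface of `F`: `G` agrees with every fixed coordinate of `F`. -/
def Subface {d : ℕ} (G F : Face d) : Prop := ∀ i b, F i = some b → G i = some b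

/-- Antipodal faces: same varying positions, opposite fixed values. -/
def Antipodal {d : ℕ} (F G : Face d) : Prop := ∀ i, G i = (F i).map (!·)

abbrev Vertex (d : ℕ) := Fin d → Bool

/-- The vertex `v` lies on the face `F`. -/
def VMem {d : ℕ} (v : Vertex d) (F : Face d) : Prop := ∀ i b, F i = some b → v i = b

/-- A set of faces contains the face `G` if `G` is a subface of one of its members. -/
def SetContains {d : ℕ} (A : Set (Face d)) (G : Face d) : Prop := ∃ F ∈ A, Subface G F

end Cube

open Cube

namespace Cube

open Finset

variable {d : ℕ}

def fixedCoords (F : Face d) : Finset (Fin d) := univ.filter fun i => F i ≠ none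

lemma mem_fixedCoords {F : Face d} {i : Fin d} : i ∈ fixedCoords F ↔ F i ≠ none := by
  simp [fixedCoords]

lemma card_fixedCoords {F : Face d} {k : ℕ} (h : IsKFace F k) :
    #(fixedCoords F) = d - k := by
  have hsplit := card_filter_add_card_filter_not
    (s := (univ : Finset (Fin d))) (p := fun i => F i = none)
  rw [IsKFace] at h
  simp only [card_univ, Fintype.card_fin, h] at hsplit
  simp only [fixedCoords, ne_eq]
  omega

lemma Subface.fixedCoords_subset {G F : Face d} (h : Subface G F) :
    fixedCoords F ⊆ fixedCoords G := by
  intro i hi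
  obtain ⟨b, hb⟩ := Option.ne_none_iff_exists'.mp (mem_fixedCoords.mp hi)
  simp [mem_fixedCoords, h i b hb]

lemma Antipodal.fixedCoords_eq {P P' : Face d} (h : Antipodal P P') :
    fixedCoords P' = fixedCoords P := by
  ext i
  simp [mem_fixedCoords, h i]

def ridgesThrough (v : Vertex d) : Set (Face d) := {R | IsKFace R (d - 2) ∧ VMem v R}

lemma disjoint_fixedCoords_of_antipodal {v : Vertex d} {P P' R R' : Face d}
    (hv : VMem v R) (hv' : VMem v R') (hPR : Subface P R) (hPR' : Subface P' R')
    (hPP' : Antipodal P P') : Disjoint (fixedCoords R) (fixedCoords R') := by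
  rw [disjoint_left]
  intro i hi hi'
  obtain ⟨b, hb⟩ := Option.ne_none_iff_exists'.mp (mem_fixedCoords.mp hi)
  obtain ⟨b', hb'⟩ := Option.ne_none_iff_exists'.mp (mem_fixedCoords.mp hi')
  have hflip : b' = !b := by simpa [hPR i b hb, hPR' i b' hb'] using hPP' i
  have hvb := hv i b hb
  have hvb' := hv' i b' hb'
  cases b <;> simp_all

lemma ridgesThrough_no_antipodal_peaks (hd : 0 < d) (v : Vertex d) :
    ¬ ∃ P P' : Face d, IsKFace P (d - 3) ∧ Antipodal P P' ∧
      SetContains (ridgesThrough v) P ∧ SetContains (ridgesThrough v) P' := by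
  rintro ⟨P, P', hP, hPP', ⟨R, ⟨hR, hvR⟩, hPR⟩, ⟨R', ⟨hR', hvR'⟩, hPR'⟩⟩
  have hsub : fixedCoords R ∪ fixedCoords R' ⊆ fixedCoords P :=
    union_subset hPR.fixedCoords_subset (hPP'.fixedCoords_eq ▸ hPR'.fixedCoords_subset)
  have hdisj := disjoint_fixedCoords_of_antipodal hvR hvR' hPR hPR' hPP'
  have hcard := card_le_card hsub
  rw [card_union_of_disjoint hdisj, card_fixedCoords hR, card_fixedCoords hR',
    card_fixedCoords hP] at hcard
  omega

def IsPairUniversal {ι : Type*} (w : ι → Vertex d) : Prop :=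
  Pairwise fun i j => ∀ a b : Bool, ∃ k, w k i = a ∧ w k j = b

lemma IsPairUniversal.exists_mem_ridgesThrough {ι : Type*} {w : ι → Vertex d}
    (hw : IsPairUniversal w) (hd : 2 ≤ d) {R : Face d} (hR : IsKFace R (d - 2)) :
    ∃ k, R ∈ ridgesThrough (w k) := by
  obtain ⟨i, j, hij, hfix⟩ : ∃ i j, i ≠ j ∧ fixedCoords R = {i, j} :=
    card_eq_two.mp (by rw [card_fixedCoords hR]; omega)
  have hi : R i ≠ none := mem_fixedCoords.mp (by simp [hfix])
  have hj : R j ≠ none := mem_fixedCoords.mp (by simp [hfix])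
  obtain ⟨a, ha⟩ := Option.ne_none_iff_exists'.mp hi
  obtain ⟨b, hb⟩ := Option.ne_none_iff_exists'.mp hj
  obtain ⟨k, hki, hkj⟩ := hw hij a b
  refine ⟨k, hR, fun l c hl => ?_⟩
  have hl' : l ∈ fixedCoords R := mem_fixedCoords.mpr (by simp [hl])
  rw [hfix, mem_insert, mem_singleton] at hl'
  rcases hl' with rfl | rfl
  · rw [ha] at hl; cases hl; exact hki
  · rw [hb] at hl; cases hl; exact hkj

def incidenceVertices {n : ℕ} (s : Fin d → Finset (Fin n)) : Fin (n + 2) → Vertex d :=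
  Fin.cons (fun _ => true) (Fin.cons (fun _ => false) fun x i => decide (x ∈ s i))

lemma isPairUniversal_incidenceVertices {n : ℕ} {s : Fin d → Finset (Fin n)}
    (hs : Pairwise fun i j => ¬ s i ⊆ s j) : IsPairUniversal (incidenceVertices s) := by
  have separate : ∀ ⦃i j⦄, i ≠ j →
      ∃ k, incidenceVertices s k i = true ∧ incidenceVertices s k j = false := by
    intro i j hij
    obtain ⟨x, hxi, hxj⟩ := not_subset.mp (hs hij)
    exact ⟨x.succ.succ, by simp [incidenceVertices, hxi, hxj]⟩
  intro i j hij a b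
  cases a <;> cases b
  · exact ⟨(0 : Fin (n + 1)).succ, by simp [incidenceVertices]⟩
  · obtain ⟨k, hk⟩ := separate hij.symm
    exact ⟨k, hk.symm⟩
  · exact separate hij
  · exact ⟨0, by simp [incidenceVertices]⟩

lemma exists_pairwise_not_subset {n : ℕ} (h : d ≤ n.choose 2) :
    ∃ s : Fin d → Finset (Fin n), Pairwise fun i j => ¬ s i ⊆ s j := by
  obtain ⟨e⟩ : Nonempty (Fin d ↪ {s : Finset (Fin n) // #s = 2}) := by
    rw [Function.Embedding.nonempty_iff_card_le]
    simpa [Fintype.card_finset_len] using h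
  refine ⟨fun i => (e i).1, fun i j hij hsub => hij (e.injective (Subtype.ext ?_))⟩
  exact eq_of_subset_of_card_le hsub (by rw [(e i).2, (e j).2])

end Cube

/-- for `d ≥ 4`, the ridges of `C^d` can be covered by `4 + ⌈d/3⌉`
sets of ridges no one of which contains a pair of antipodal peaks. -/
theorem cover_no_antipodal_peaks (d : ℕ) (hd : 4 ≤ d) :
    ∃ A : Fin (4 + (d + 2) / 3) → Set (Face d),
      (∀ i R, R ∈ A i → IsKFace R (d - 2)) ∧
      (∀ R : Face d, IsKFace R (d - 2) → ∃ i, R ∈ A i) ∧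
      (∀ i, ¬ ∃ P P' : Face d, IsKFace P (d - 3) ∧ Antipodal P P' ∧
        SetContains (A i) P ∧ SetContains (A i) P') := by
  set m := (d + 2) / 3
  have hchoose : d ≤ (m + 2).choose 2 := by
    rw [Nat.choose_two_right, Nat.le_div_iff_mul_le two_pos]
    have h3m : d ≤ 3 * m := by omega
    have hm2 : 2 ≤ m := by omega
    rw [show m + 2 - 1 = m + 1 from rfl]
    nlinarith
  obtain ⟨s, hs⟩ := exists_pairwise_not_subset hchoose
  obtain ⟨w, hw⟩ : ∃ w : Fin (4 + m) → Vertex d, IsPairUniversal w := by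
    rw [show 4 + m = m + 2 + 2 by omega]
    exact ⟨_, isPairUniversal_incidenceVertices hs⟩
  refine ⟨fun k => ridgesThrough (w k), fun _ _ hR => hR.1, fun R hR => ?_,
    fun _ => ridgesThrough_no_antipodal_peaks (by omega) _⟩
  exact hw.exists_mem_ridgesThrough (by omega) hR
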